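/- Let α > 0 and 0 ≤ a < b. For fixed x ∈ ℝ³, x ≠ 0, and a C¹ function φ: [a,b] → ℝ, the following integration by parts identity holds for all t ∈ (a, b]: −∫_a^t (∂/∂τ)[G_α(x, t−τ)] φ(τ) dτ = G_α(x, t−a) φ(a) + ∫_a^t G_α(x, t−τ) φ'(τ) dτ. -/

import Mathlib

/-!
For `x ≠ 0` and `c = ‖x‖² / (4α) > 0`, the kernel `s ↦ G_α(x, s)` is `(4πα)^(-3/2)` times
`s^(-3/2) e^(-c/s)` extended by `0` to `s ≤ 0`. Since `e^(-c/s)` beats every power of `s` as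
`s → 0⁺`, each profile `s^(-r) e^(-c/s)` is continuous on `ℝ`, and its derivative is a combination
of the profiles of exponents `r + 1` and `r + 2`; so `G_α(x, ·)` is `C¹` on all of `ℝ` with
`G_α(x, 0) = 0`. Ordinary integration by parts on `[a, t]` applies, and the boundary term at
`τ = t` vanishes.
-/

open Set

/-- The 3D heat kernel, extended by zero for `t ≤ 0`. -/
noncomputable def heatKernel (α : ℝ) (x : EuclideanSpace ℝ (Fin 3)) (t : ℝ) : ℝ :=
  if 0 < t then (4 * Real.pi * α * t) ^ (-(3 : ℝ) / 2) * Real.exp (-‖x‖ ^ 2 / (4 * α * t))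
  else 0

open Real Filter Topology

noncomputable def rpowNegMulExpNegDiv (c r s : ℝ) : ℝ :=
  if 0 < s then s ^ (-r) * exp (-c / s) else 0

section rpowNegMulExpNegDiv

variable {c r s : ℝ}

lemma rpowNegMulExpNegDiv_of_pos (hs : 0 < s) :
    rpowNegMulExpNegDiv c r s = s ^ (-r) * exp (-c / s) :=
  if_pos hs

lemma rpowNegMulExpNegDiv_of_nonpos (hs : s ≤ 0) : rpowNegMulExpNegDiv c r s = 0 :=
  if_neg hs.not_gt

lemma rpowNegMulExpNegDiv_add_one (c r s : ℝ) :
    rpowNegMulExpNegDiv c (r + 1) s = s⁻¹ * rpowNegMulExpNegDiv c r s := by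
  rcases le_or_gt s 0 with hs | hs
  · simp [rpowNegMulExpNegDiv_of_nonpos hs]
  · rw [rpowNegMulExpNegDiv_of_pos hs, rpowNegMulExpNegDiv_of_pos hs, neg_add,
      rpow_add hs, rpow_neg_one]
    ring

lemma rpowNegMulExpNegDiv_eventuallyEq_of_pos (hs : 0 < s) :
    rpowNegMulExpNegDiv c r =ᶠ[𝓝 s] fun y => y ^ (-r) * exp (-c / y) := by
  filter_upwards [Ioi_mem_nhds hs] with y hy using rpowNegMulExpNegDiv_of_pos hy

lemma rpowNegMulExpNegDiv_eventuallyEq_of_neg (hs : s < 0) :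
    rpowNegMulExpNegDiv c r =ᶠ[𝓝 s] fun _ => 0 := by
  filter_upwards [Iio_mem_nhds hs] with y hy using rpowNegMulExpNegDiv_of_nonpos hy.le

/-- With `u = s⁻¹` this is `u ^ r * exp (-c u) → 0` as `u → ∞`. -/
lemma tendsto_rpowNegMulExpNegDiv_nhdsGT_zero (hc : 0 < c) (r : ℝ) :
    Tendsto (rpowNegMulExpNegDiv c r) (𝓝[>] 0) (𝓝 0) := by
  refine ((tendsto_rpow_mul_exp_neg_mul_atTop_nhds_zero r c hc).comp
    tendsto_inv_nhdsGT_zero).congr' ?_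
  filter_upwards [self_mem_nhdsWithin] with s (hs : 0 < s)
  rw [Function.comp_apply, rpowNegMulExpNegDiv_of_pos hs, inv_rpow hs.le, ← rpow_neg hs.le]
  ring_nf

lemma continuous_rpowNegMulExpNegDiv (hc : 0 < c) (r : ℝ) :
    Continuous (rpowNegMulExpNegDiv c r) := by
  refine continuous_iff_continuousAt.2 fun s => ?_
  rcases lt_trichotomy s 0 with hs | rfl | hs
  · exact continuousAt_const.congr (rpowNegMulExpNegDiv_eventuallyEq_of_neg hs).symm
  · refine continuousAt_iff_continuous_left_right.2 ⟨?_, ?_⟩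
    · exact continuousWithinAt_const.congr (fun y hy => rpowNegMulExpNegDiv_of_nonpos hy)
        (rpowNegMulExpNegDiv_of_nonpos le_rfl)
    · rw [← continuousWithinAt_Ioi_iff_Ici, ContinuousWithinAt,
        rpowNegMulExpNegDiv_of_nonpos le_rfl]
      exact tendsto_rpowNegMulExpNegDiv_nhdsGT_zero hc r
  · refine ContinuousAt.congr ?_ (rpowNegMulExpNegDiv_eventuallyEq_of_pos hs).symm
    exact (continuousAt_rpow_const s _ (Or.inl hs.ne')).mul
      (continuous_exp.continuousAt.comp (continuousAt_const.div continuousAt_id hs.ne'))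

lemma hasDerivAt_rpowNegMulExpNegDiv_of_pos (hs : 0 < s) :
    HasDerivAt (rpowNegMulExpNegDiv c r)
      (c * rpowNegMulExpNegDiv c (r + 2) s - r * rpowNegMulExpNegDiv c (r + 1) s) s := by
  have hpow : HasDerivAt (fun y => y ^ (-r)) (-r * s ^ (-r - 1)) s := by
    simpa using hasDerivAt_rpow_const (p := -r) (Or.inl hs.ne')
  have hexp : HasDerivAt (fun y => exp (-c / y)) (exp (-c / s) * (c / s ^ 2)) s := by
    have h := ((hasDerivAt_inv hs.ne').const_mul (-c)).exp
    simp only [← div_eq_mul_inv] at h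
    convert h using 2
    field_simp
  refine ((hpow.mul hexp).congr_of_eventuallyEq
    (rpowNegMulExpNegDiv_eventuallyEq_of_pos hs)).congr_deriv ?_
  rw [show r + 2 = r + 1 + 1 by ring, rpowNegMulExpNegDiv_add_one, rpowNegMulExpNegDiv_add_one,
    rpowNegMulExpNegDiv_of_pos hs, sub_eq_add_neg (-r), rpow_add hs, rpow_neg_one]
  field_simp
  ring

/-- At `0` the difference quotient of the profile of exponent `r` is the profile of
exponent `r + 1`, which is continuous and vanishes there. -/
lemma hasDerivAt_rpowNegMulExpNegDiv (hc : 0 < c) (r s : ℝ) :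
    HasDerivAt (rpowNegMulExpNegDiv c r)
      (c * rpowNegMulExpNegDiv c (r + 2) s - r * rpowNegMulExpNegDiv c (r + 1) s) s := by
  rcases lt_trichotomy s 0 with hs | rfl | hs
  · simp only [rpowNegMulExpNegDiv_of_nonpos hs.le, mul_zero, sub_zero]
    exact (hasDerivAt_const s 0).congr_of_eventuallyEq
      (rpowNegMulExpNegDiv_eventuallyEq_of_neg hs)
  · simp only [rpowNegMulExpNegDiv_of_nonpos le_rfl, mul_zero, sub_zero]
    have hslope : slope (rpowNegMulExpNegDiv c r) 0 = rpowNegMulExpNegDiv c (r + 1) := by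
      ext y
      rw [slope_def_field, rpowNegMulExpNegDiv_of_nonpos le_rfl, rpowNegMulExpNegDiv_add_one]
      ring
    rw [hasDerivAt_iff_tendsto_slope, hslope]
    have h := (continuous_rpowNegMulExpNegDiv hc (r + 1)).tendsto 0
    rw [rpowNegMulExpNegDiv_of_nonpos le_rfl] at h
    exact h.mono_left nhdsWithin_le_nhds
  · exact hasDerivAt_rpowNegMulExpNegDiv_of_pos hs

lemma contDiff_one_rpowNegMulExpNegDiv (hc : 0 < c) (r : ℝ) :
    ContDiff ℝ 1 (rpowNegMulExpNegDiv c r) := by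
  refine contDiff_one_iff_deriv.2
    ⟨fun s => (hasDerivAt_rpowNegMulExpNegDiv hc r s).differentiableAt, ?_⟩
  rw [funext fun s => (hasDerivAt_rpowNegMulExpNegDiv hc r s).deriv]
  exact (continuous_const.mul (continuous_rpowNegMulExpNegDiv hc _)).sub
    (continuous_const.mul (continuous_rpowNegMulExpNegDiv hc _))

end rpowNegMulExpNegDiv

lemma heatKernel_eq_mul_rpowNegMulExpNegDiv {α : ℝ} (hα : 0 ≤ α)
    (x : EuclideanSpace ℝ (Fin 3)) :
    heatKernel α x = fun s =>
      (4 * π * α) ^ (-(3 : ℝ) / 2) * rpowNegMulExpNegDiv (‖x‖ ^ 2 / (4 * α)) (3 / 2) s := by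
  ext s
  rcases le_or_gt s 0 with hs | hs
  · simp [heatKernel, rpowNegMulExpNegDiv_of_nonpos hs, hs.not_gt]
  · rw [heatKernel, if_pos hs, rpowNegMulExpNegDiv_of_pos hs, mul_rpow (by positivity) hs.le]
    ring_nf

lemma contDiff_one_heatKernel {α : ℝ} (hα : 0 < α) {x : EuclideanSpace ℝ (Fin 3)} (hx : x ≠ 0) :
    ContDiff ℝ 1 (heatKernel α x) := by
  rw [heatKernel_eq_mul_rpowNegMulExpNegDiv hα.le]
  exact contDiff_const.mul (contDiff_one_rpowNegMulExpNegDiv (by positivity) _)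

theorem neg_integral_deriv_comp_const_sub_mul {K : ℝ → ℝ} (hK : ContDiff ℝ 1 K) (hK0 : K 0 = 0)
    {a t : ℝ} (hat : a ≤ t) {φ φ' : ℝ → ℝ}
    (hφ : ∀ τ ∈ Icc a t, HasDerivWithinAt φ (φ' τ) (Icc a t) τ)
    (hφ' : ContinuousOn φ' (Icc a t)) :
    -∫ τ in a..t, deriv (fun τ => K (t - τ)) τ * φ τ =
      K (t - a) * φ a + ∫ τ in a..t, K (t - τ) * φ' τ := by
  have hKd : ∀ τ, HasDerivAt (fun τ => K (t - τ)) (-deriv K (t - τ)) τ := fun τ =>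
    (hK.differentiable one_ne_zero (t - τ)).hasDerivAt.comp_const_sub t τ
  have hK' : Continuous fun τ => -deriv K (t - τ) := by
    have := hK.continuous_deriv le_rfl
    fun_prop
  have hparts := intervalIntegral.integral_mul_deriv_eq_deriv_mul_of_hasDerivWithinAt
    (fun τ _ => (hKd τ).hasDerivWithinAt) (uIcc_of_le hat ▸ hφ) (hK'.intervalIntegrable a t)
    (hφ'.intervalIntegrable_of_Icc hat)
  simp only [sub_self, hK0, zero_mul, zero_sub] at hparts
  simp only [fun τ => (hKd τ).deriv]
  linarith

theorem heatKernel_integration_by_parts_time_general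
    (α : ℝ) (hα : 0 < α) (a b : ℝ)
    (x : EuclideanSpace ℝ (Fin 3)) (hx : x ≠ 0)
    (φ φ' : ℝ → ℝ)
    (hφ : ∀ τ ∈ Icc a b, HasDerivWithinAt φ (φ' τ) (Icc a b) τ)
    (hφ' : ContinuousOn φ' (Icc a b))
    (t : ℝ) (ht : t ∈ Ioc a b) :
    -∫ τ in a..t, deriv (fun τ => heatKernel α x (t - τ)) τ * φ τ =
      heatKernel α x (t - a) * φ a + ∫ τ in a..t, heatKernel α x (t - τ) * φ' τ := by
  have hsub : Icc a t ⊆ Icc a b := Icc_subset_Icc_right ht.2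
  exact neg_integral_deriv_comp_const_sub_mul (contDiff_one_heatKernel hα hx)
    (by simp [heatKernel]) ht.1.le (fun τ hτ => (hφ τ (hsub hτ)).mono hsub) (hφ'.mono hsub)

/-- For `α > 0`, `0 ≤ a < b`, `x ≠ 0`, a `C¹` function `φ` on `[a,b]` (with derivative `φ'`)
and `t ∈ (a, b]`:
`−∫_a^t (∂/∂τ)[G_α(x, t−τ)] φ(τ) dτ = G_α(x, t−a) φ(a) + ∫_a^t G_α(x, t−τ) φ'(τ) dτ`. -/
theorem heatKernel_integration_by_parts_time
    (α : ℝ) (hα : 0 < α) (a b : ℝ) (ha : 0 ≤ a) (hab : a < b)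
    (x : EuclideanSpace ℝ (Fin 3)) (hx : x ≠ 0)
    (φ φ' : ℝ → ℝ)
    (hφ : ∀ τ ∈ Icc a b, HasDerivWithinAt φ (φ' τ) (Icc a b) τ)
    (hφ' : ContinuousOn φ' (Icc a b))
    (t : ℝ) (ht : t ∈ Ioc a b) :
    -∫ τ in a..t, deriv (fun τ => heatKernel α x (t - τ)) τ * φ τ =
      heatKernel α x (t - a) * φ a + ∫ τ in a..t, heatKernel α x (t - τ) * φ' τ :=
  heatKernel_integration_by_parts_time_general α hα a b x hx φ φ' hφ hφ' t ht
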